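/- If all transactions in a schedule execute under semantics where WW and WR edges imply commit(source) < start(target), RW edges require concurrency, and no transaction is concurrently both the target of an RW edge and the source of an RW edge (i.e., no vertex has both an incoming and outgoing RW edge among concurrent transactions), then the dependency graph is acyclic. -/

import Mathlib

inductive Lbl | WW | WR | RW
deriving DecidableEq

/-- Two transactions are concurrent if their `[start, commit]` intervals overlap. -/
def Concurrent {V : Type*} (start commit : V → ℝ) (i j : V) : Prop :=
  start i < commit j ∧ start j < commit i

/-- If WW/WR edges imply commit(source) < start(target), RW edges require
concurrency, and no transaction is both the target of an RW edge from a
concurrent transaction and the source of an RW edge to a concurrent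
transaction (no pivot), then the dependency graph is acyclic. -/
theorem stmt_14 {V : Type*} (E : V → V → Lbl → Prop)
    (start commit : V → ℝ)
    (hsc : ∀ T, start T < commit T)
    (hinj : Function.Injective commit)
    (hOther : ∀ i j l, E i j l → l ≠ Lbl.RW → commit i < start j)
    (hRWconc : ∀ i j, E i j Lbl.RW → Concurrent start commit i j)
    (hNoPivot : ∀ i j k, E i j Lbl.RW → Concurrent start commit i j →
      E j k Lbl.RW → Concurrent start commit j k → False) :
    ∀ (n : ℕ), 0 < n → ∀ (f : ZMod n → V) (lbl : ZMod n → Lbl),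
      (∀ i : ZMod n, E (f i) (f (i + 1)) (lbl i)) → False := by
  intro n hn f lbl hcyc
  haveI : NeZero n := ⟨hn.ne'⟩
  obtain ⟨m, hm⟩ := Finite.exists_min (fun i : ZMod n => commit (f i))
  have h1 := hcyc (m - 1)
  rw [sub_add_cancel] at h1
  have hRW1 : lbl (m - 1) = Lbl.RW := by
    by_contra h
    have h2 := hOther _ _ _ h1 h
    have h3 := hsc (f m)
    have h4 := hm (m - 1)
    linarith
  rw [hRW1] at h1
  have hc1 := hRWconc _ _ h1
  have h2 := hcyc (m - 1 - 1)
  rw [sub_add_cancel] at h2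
  by_cases hl2 : lbl (m - 1 - 1) = Lbl.RW
  · rw [hl2] at h2
    exact hNoPivot _ _ _ h2 (hRWconc _ _ h2) h1 hc1
  · have hlt := hOther _ _ _ h2 hl2
    have h5 := hc1.1
    have h6 := hm (m - 1 - 1)
    linarith
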